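/- The following are equivalent: (i) F admits a unique injective selection; (ii) F^*(x) is a singleton for each x ∈ X; (iii) F admits a Hall partition (W_1,…,W_m) with m = ♯F(X). Moreover, in this case m = ♯X. -/
import Mathlib


open Finset
open scoped Classical

variable {α β : Type*}

section Defs
variable [DecidableEq α] [DecidableEq β]

/-- Image of a set under a set-valued mapping. -/
def im (F : α → Finset β) (W : Finset α) : Finset β := W.biUnion F

/-- Complement mapping `F_W : x ↦ F(x) \\ F(W)`. -/
def cmap (F : α → Finset β) (W : Finset α) : α → Finset β := fun x => F x \ im F W

/-- Hall condition of a set-valued mapping on a domain `D`. -/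
def HallOn (F : α → Finset β) (D : Finset α) : Prop := ∀ W ⊆ D, W.card ≤ (im F W).card

/-- A critical set: nonempty with `♯F(W) = ♯W`. -/
def Critical (F : α → Finset β) (W : Finset α) : Prop := W.Nonempty ∧ (im F W).card = W.card

/-- A non-reducible set: nonempty with no proper critical subset. -/
def NonReducible (F : α → Finset β) (W : Finset α) : Prop :=
  W.Nonempty ∧ ∀ V, V ⊂ W → ¬ Critical F V

/-- Union of the first `i` parts: `⋃_{j<i} W_j`. -/
def pre {m : ℕ} (W : Fin m → Finset α) (i : Fin m) : Finset α :=
  (Finset.univ.filter (fun j => j.val < i.val)).biUnion W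

/-- Hall partition of `F` on the whole domain. -/
def IsHallPartition [Fintype α] (F : α → Finset β) {m : ℕ} (W : Fin m → Finset α) : Prop :=
  (∀ i j, i ≠ j → Disjoint (W i) (W j)) ∧
  (Finset.univ.biUnion W = Finset.univ) ∧
  (∀ i, ∀ x ∈ W i, (cmap F (pre W i) x).Nonempty) ∧
  (∀ i, NonReducible (cmap F (pre W i)) (W i)) ∧
  (∀ i : Fin m, i.val < m - 1 → Critical (cmap F (pre W i)) (W i))

/-- The alldifferent kernel `F^*`. -/
noncomputable def kernel [Fintype α] (F : α → Finset β) : α → Finset β :=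
  fun x => (F x).filter (fun y => ∃ s : α → β, Function.Injective s ∧ (∀ z, s z ∈ F z) ∧ s x = y)

end Defs


section Aux
variable [DecidableEq α] [DecidableEq β]

set_option linter.unusedSectionVars false
set_option maxHeartbeats 1000000

lemma exists_forced (D : Finset α) (G : α → Finset β) (s : α → β)
    (hsel : ∀ x ∈ D, s x ∈ G x) (hinj : Set.InjOn s D)
    (huniq : ∀ s' : α → β, (∀ x ∈ D, s' x ∈ G x) → Set.InjOn s' D → ∀ x ∈ D, s' x = s x)
    (hD : D.Nonempty) : ∃ x ∈ D, G x = {s x} := by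
  by_contra hcon
  push_neg at hcon
  have ht0 : ∀ x ∈ D, ∃ y ∈ G x, y ≠ s x := by
    intro x hx
    by_contra h
    push_neg at h
    exact hcon x hx (Finset.eq_singleton_iff_unique_mem.2 ⟨hsel x hx, h⟩)
  have ht : ∀ x : α, ∃ y : β, x ∈ D → y ∈ G x ∧ y ≠ s x := by
    intro x
    by_cases hx : x ∈ D
    · obtain ⟨y, hy1, hy2⟩ := ht0 x hx
      exact ⟨y, fun _ => ⟨hy1, hy2⟩⟩
    · exact ⟨s x, fun h => absurd h hx⟩
  choose t ht using ht
  have htG : ∀ x ∈ D, t x ∈ G x := fun x hx => (ht x hx).1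
  have hts : ∀ x ∈ D, t x ≠ s x := fun x hx => (ht x hx).2
  by_cases hc : ∃ x ∈ D, ∀ z ∈ D, s z ≠ t x
  · obtain ⟨x, hx, hnew⟩ := hc
    set s' := Function.update s x (t x) with hs'
    have hsel' : ∀ z ∈ D, s' z ∈ G z := by
      intro z hz
      by_cases hzx : z = x
      · subst hzx; simpa [hs'] using htG z hz
      · simpa [hs', Function.update_of_ne hzx] using hsel z hz
    have hinj' : Set.InjOn s' D := by
      intro z hz w hw he
      by_cases hzx : z = x <;> by_cases hwx : w = x
      · rw [hzx, hwx]
      · subst hzx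
        rw [hs', Function.update_self, Function.update_of_ne hwx] at he
        exact absurd he.symm (hnew w hw)
      · subst hwx
        rw [hs', Function.update_self, Function.update_of_ne hzx] at he
        exact absurd he (hnew z hz)
      · rw [hs', Function.update_of_ne hzx, Function.update_of_ne hwx] at he
        exact hinj hz hw he
    have := huniq s' hsel' hinj' x hx
    rw [hs', Function.update_self] at this
    exact hts x hx this
  · push_neg at hc
    obtain ⟨x0, hx0⟩ := hD
    -- define g
    have hgex : ∀ x : α, ∃ z : α, z ∈ D ∧ (x ∈ D → (z ≠ x ∧ s z = t x)) := by
      intro x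
      by_cases hx : x ∈ D
      · obtain ⟨z, hz, hsz⟩ := hc x hx
        refine ⟨z, hz, fun _ => ⟨?_, hsz⟩⟩
        intro hzx; subst hzx; exact hts z hx hsz.symm
      · exact ⟨x0, hx0, fun h => absurd h hx⟩
    choose g hgD hgp using hgex
    have hgne : ∀ x ∈ D, g x ≠ x := fun x hx => (hgp x hx).1
    have hgs : ∀ x ∈ D, s (g x) = t x := fun x hx => (hgp x hx).2
    -- iterates stay in D
    have hiter : ∀ n : ℕ, g^[n] x0 ∈ D := by
      intro n
      induction n with
      | zero => simpa using hx0
      | succ n ih => rw [Function.iterate_succ_apply']; exact hgD _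
    -- pigeonhole
    obtain ⟨i, hi, j, hj, hij, hee⟩ :=
      Finset.exists_ne_map_eq_of_card_lt_of_maps_to
        (s := Finset.range (D.card + 1)) (t := D)
        (by simp) (fun n _ => hiter n)
    wlog hlt : i < j generalizing i j
    · exact this j hj i hi hij.symm hee.symm (by omega)
    set k := j - i with hk
    have hk1 : 1 ≤ k := by omega
    set a := g^[i] x0 with ha
    have haD : a ∈ D := hiter i
    have hka : g^[k] a = a := by
      rw [ha, ← Function.iterate_add_apply, hk]
      rw [Nat.sub_add_cancel (le_of_lt hlt)]
      exact hee.symm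
    clear_value a k
    clear ha hee hk hi hj hij hlt
    have hper : ∀ n : ℕ, g^[n + k] a = g^[n] a := by
      intro n; rw [Function.iterate_add_apply, hka]
    set O : Set α := Set.range (fun n => g^[n] a) with hO
    have haO : a ∈ O := ⟨0, rfl⟩
    have hOD : ∀ x ∈ O, x ∈ D := by
      rintro x ⟨n, rfl⟩
      show g^[n] a ∈ D
      cases n with
      | zero => simpa using haD
      | succ n => rw [Function.iterate_succ_apply']; exact hgD _
    have hgO : ∀ x ∈ O, g x ∈ O := by
      rintro x ⟨n, rfl⟩
      refine ⟨n + 1, ?_⟩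
      show g^[n+1] a = g (g^[n] a)
      rw [Function.iterate_succ_apply']
    have hgInjO : ∀ x ∈ O, ∀ z ∈ O, g x = g z → x = z := by
      rintro x ⟨p, rfl⟩ z ⟨q, rfl⟩ he
      show g^[p] a = g^[q] a
      have h1 : g^[p + 1] a = g^[q + 1] a := by
        simpa [Function.iterate_succ_apply'] using he
      have h2 : g^[k - 1] (g^[p + 1] a) = g^[k - 1] (g^[q + 1] a) := by rw [h1]
      rw [← Function.iterate_add_apply, ← Function.iterate_add_apply] at h2
      have hpk : k - 1 + (p + 1) = p + k := by omega
      have hqk : k - 1 + (q + 1) = q + k := by omega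
      rw [hpk, hqk, hper p, hper q] at h2
      exact h2
    set s' : α → β := fun x => if x ∈ O then s (g x) else s x with hs'
    have hsel' : ∀ z ∈ D, s' z ∈ G z := by
      intro z hz
      by_cases hzO : z ∈ O
      · rw [hs']; simp only [hzO, if_pos]
        rw [hgs z hz]; exact htG z hz
      · rw [hs']; simp only [hzO, if_neg, if_false]; exact hsel z hz
    have hinj' : Set.InjOn s' D := by
      intro z hz w hw he
      rw [hs'] at he
      by_cases hzO : z ∈ O <;> by_cases hwO : w ∈ O
      · simp only [hzO, hwO, if_pos] at he
        exact hgInjO z hzO w hwO (hinj (hgD z) (hgD w) he)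
      · simp only [hzO, hwO, if_pos, if_neg, if_false] at he
        have := hinj (hgD z) hw he
        exact absurd (this ▸ hgO z hzO) hwO
      · simp only [hzO, hwO, if_pos, if_neg, if_false] at he
        have := hinj hz (hgD w) he
        exact absurd (this ▸ hgO w hwO) hzO
      · simp only [hzO, hwO, if_neg, if_false] at he
        exact hinj hz hw he
    have := huniq s' hsel' hinj' a haD
    rw [hs'] at this
    simp only [haO, if_pos] at this
    have : g a = a := hinj (hgD a) haD this
    exact hgne a haD this

lemma im_sdiff (G : α → Finset β) (B : Finset β) (T : Finset α) :
    im (fun x => G x \ B) T = im G T \ B := by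
  ext y; simp [im]; tauto

lemma im_mono (G : α → Finset β) {S T : Finset α} (h : S ⊆ T) : im G S ⊆ im G T :=
  Finset.biUnion_subset_biUnion_of_subset_left _ h

lemma enum_lemma : ∀ (n : ℕ) (D : Finset α) (G : α → Finset β) (s : α → β),
    D.card = n →
    (∀ x ∈ D, s x ∈ G x) → Set.InjOn s D →
    (∀ s' : α → β, (∀ x ∈ D, s' x ∈ G x) → Set.InjOn s' D → ∀ x ∈ D, s' x = s x) →
    ∃ e : Fin n → α, (∀ i, e i ∈ D) ∧ Function.Injective e ∧
      ∀ i : Fin n, G (e i) \ im G ((Finset.univ.filter (fun j : Fin n => j.val < i.val)).image e)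
        = {s (e i)} := by
  intro n
  induction n with
  | zero =>
    intro D G s _ _ _ _
    exact ⟨Fin.elim0, fun i => i.elim0, fun i => i.elim0, fun i => i.elim0⟩
  | succ n ih =>
    intro D G s hcard hsel hinj huniq
    have hD : D.Nonempty := by
      rw [← Finset.card_pos, hcard]; omega
    obtain ⟨x0, hx0, hGx0⟩ := exists_forced D G s hsel hinj huniq hD
    set D' := D.erase x0 with hD'
    set G' : α → Finset β := fun x => G x \ G x0 with hG'
    have hcard' : D'.card = n := by
      rw [hD', Finset.card_erase_of_mem hx0, hcard]; omega
    have hsub : D' ⊆ D := Finset.erase_subset _ _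
    have hsel' : ∀ x ∈ D', s x ∈ G' x := by
      intro x hx
      rw [hG']
      simp only [Finset.mem_sdiff]
      refine ⟨hsel x (hsub hx), ?_⟩
      rw [hGx0, Finset.mem_singleton]
      intro h
      exact (Finset.mem_erase.1 hx).1 (hinj (hsub hx) hx0 h)
    have hinj' : Set.InjOn s D' := hinj.mono (by exact_mod_cast hsub)
    have huniq' : ∀ s'' : α → β, (∀ x ∈ D', s'' x ∈ G' x) → Set.InjOn s'' D' →
        ∀ x ∈ D', s'' x = s x := by
      intro s'' hsel'' hinj'' x hx
      set s1 := Function.update s'' x0 (s x0) with hs1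
      have hsel1 : ∀ z ∈ D, s1 z ∈ G z := by
        intro z hz
        by_cases hzx : z = x0
        · subst hzx; simpa [hs1] using hsel z hz
        · rw [hs1, Function.update_of_ne hzx]
          have hzD' : z ∈ D' := Finset.mem_erase.2 ⟨hzx, hz⟩
          exact Finset.sdiff_subset (hsel'' z hzD')
      have hninG : ∀ z ∈ D', s'' z ≠ s x0 := by
        intro z hz h
        have := hsel'' z hz
        rw [hG', Finset.mem_sdiff, hGx0] at this
        exact this.2 (by rw [h]; exact Finset.mem_singleton_self _)
      have hinj1 : Set.InjOn s1 D := by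
        intro z hz w hw he
        by_cases hzx : z = x0 <;> by_cases hwx : w = x0
        · rw [hzx, hwx]
        · subst hzx
          rw [hs1, Function.update_self, Function.update_of_ne hwx] at he
          exact absurd he.symm (hninG w (Finset.mem_erase.2 ⟨hwx, hw⟩))
        · subst hwx
          rw [hs1, Function.update_self, Function.update_of_ne hzx] at he
          exact absurd he (hninG z (Finset.mem_erase.2 ⟨hzx, hz⟩))
        · rw [hs1, Function.update_of_ne hzx, Function.update_of_ne hwx] at he
          exact hinj'' (Finset.mem_erase.2 ⟨hzx, hz⟩) (Finset.mem_erase.2 ⟨hwx, hw⟩) he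
      have := huniq s1 hsel1 hinj1 x (hsub hx)
      rwa [hs1, Function.update_of_ne (Finset.mem_erase.1 hx).1] at this
    obtain ⟨e', he'D, he'inj, he'prop⟩ := ih D' G' s hcard' hsel' hinj' huniq'
    refine ⟨Fin.cons x0 e', ?_, ?_, ?_⟩
    · intro i
      induction i using Fin.cases with
      | zero => simpa using hx0
      | succ i => simpa using hsub (he'D i)
    · rw [Fin.cons_injective_iff]
      refine ⟨?_, he'inj⟩
      rintro ⟨i, rfl⟩
      exact (Finset.mem_erase.1 (he'D i)).1 rfl
    · intro i
      induction i using Fin.cases with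
      | zero =>
        have : (Finset.univ.filter (fun j : Fin (n+1) => j.val < (0 : Fin (n+1)).val)) = ∅ := by
          ext j; simp
        rw [this]
        simp [im, hGx0]
      | succ i =>
        have hset : (Finset.univ.filter
              (fun j : Fin (n+1) => j.val < (Fin.succ i).val)).image (Fin.cons x0 e')
            = insert x0 ((Finset.univ.filter (fun j : Fin n => j.val < i.val)).image e') := by
          ext z
          simp only [Finset.mem_image, Finset.mem_filter, Finset.mem_univ, true_and,
            Finset.mem_insert]
          constructor
          · rintro ⟨j, hj, rfl⟩
            induction j using Fin.cases with
            | zero => left; simp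
            | succ j =>
              right
              exact ⟨j, by simpa using hj, by simp⟩
          · rintro (rfl | ⟨j, hj, rfl⟩)
            · exact ⟨0, by simp, by simp⟩
            · exact ⟨Fin.succ j, by simpa using hj, by simp⟩
        rw [hset, Fin.cons_succ]
        rw [show im G (insert x0 ((Finset.univ.filter (fun j : Fin n => j.val < i.val)).image e'))
            = G x0 ∪ im G ((Finset.univ.filter (fun j : Fin n => j.val < i.val)).image e') from
          Finset.biUnion_insert]
        have h1 := he'prop i
        rw [hG'] at h1
        rw [im_sdiff] at h1
        rw [← h1]
        ext z
        simp only [Finset.mem_sdiff, Finset.mem_union]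
        tauto

lemma hall_of_nonReducible (G : α → Finset β) (W : Finset α) (hnr : NonReducible G W)
    (hne : ∀ x ∈ W, (G x).Nonempty) : ∀ V ⊆ W, V.card ≤ (im G V).card := by
  intro V
  induction V using Finset.strongInductionOn with
  | _ V ih =>
    intro hVW
    rcases V.eq_empty_or_nonempty with rfl | ⟨v, hv⟩
    · simp [im]
    · set U := V.erase v with hU
      have hUV : U ⊂ V := Finset.erase_ssubset hv
      have hcardU := ih U hUV (hUV.subset.trans hVW)
      have hUim : im G U ⊆ im G V := im_mono G hUV.subset
      rcases U.eq_empty_or_nonempty with hUe | hUne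
      · have hVv : V = {v} := by
          apply Finset.eq_singleton_iff_unique_mem.2
          refine ⟨hv, fun x hx => ?_⟩
          by_contra hne'
          have : x ∈ U := Finset.mem_erase.2 ⟨hne', hx⟩
          rw [hUe] at this; exact absurd this (Finset.notMem_empty x)
        rw [hVv]
        have : im G {v} = G v := Finset.singleton_biUnion
        rw [this, Finset.card_singleton]
        exact Finset.card_pos.2 (hne v (hVW hv))
      · have hlt : U.card < (im G U).card := by
          rcases lt_or_eq_of_le hcardU with h | h
          · exact h
          · exact absurd ⟨hUne, h.symm⟩ (hnr.2 U (hUV.trans_subset hVW))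
        have : V.card = U.card + 1 := by
          rw [hU, Finset.card_erase_of_mem hv]
          have : 0 < V.card := Finset.card_pos.2 ⟨v, hv⟩
          omega
        calc V.card = U.card + 1 := this
          _ ≤ (im G U).card := hlt
          _ ≤ (im G V).card := Finset.card_le_card hUim

lemma reverse_struct [Fintype α] (F : α → Finset β) {m : ℕ} (W : Fin m → Finset α)
    (hp : IsHallPartition F W) (hm : m = (im F Finset.univ).card) :
    (∃! s : α → β, Function.Injective s ∧ ∀ x, s x ∈ F x) ∧ m = Fintype.card α := by
  obtain ⟨hdisj, hcover, hne, hnr, _⟩ := hp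
  set A : Fin m → Finset β := fun i => im (cmap F (pre W i)) (W i) with hA
  have hA_sub_imW : ∀ i, A i ⊆ im F (W i) := by
    intro i y hy
    rw [hA] at hy
    simp only [im, Finset.mem_biUnion] at hy ⊢
    obtain ⟨x, hx, hvx⟩ := hy
    exact ⟨x, hx, (Finset.mem_sdiff.1 hvx).1⟩
  have hWpre : ∀ i j : Fin m, i.val < j.val → W i ⊆ pre W j := by
    intro i j hij x hx
    rw [pre, Finset.mem_biUnion]
    exact ⟨i, Finset.mem_filter.2 ⟨Finset.mem_univ _, hij⟩, hx⟩
  have hA_notpre : ∀ j : Fin m, ∀ y ∈ A j, y ∉ im F (pre W j) := by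
    intro j y hy
    rw [hA] at hy
    simp only [im, cmap, Finset.mem_biUnion] at hy
    obtain ⟨x, _, hvx⟩ := hy
    exact (Finset.mem_sdiff.1 hvx).2
  have hA_disj : ∀ i j : Fin m, i ≠ j → Disjoint (A i) (A j) := by
    have key : ∀ i j : Fin m, i.val < j.val → Disjoint (A i) (A j) := by
      intro i j hij
      rw [Finset.disjoint_left]
      intro y hyi hyj
      exact hA_notpre j y hyj (im_mono F (hWpre i j hij) (hA_sub_imW i hyi))
    intro i j hij
    rcases lt_or_gt_of_ne (fun h : i.val = j.val => hij (Fin.ext h)) with h | h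
    · exact key i j h
    · exact (key j i h).symm
  have hWcard : ∀ i, (W i).card ≤ (A i).card := by
    intro i
    exact hall_of_nonReducible _ _ (hnr i) (hne i) (W i) (Finset.Subset.refl _)
  have hW1 : ∀ i, 1 ≤ (W i).card := fun i => Finset.card_pos.2 (hnr i).1
  have hsum : ∑ i : Fin m, (A i).card = (Finset.univ.biUnion A).card :=
    (Finset.card_biUnion (fun i _ j _ hij => hA_disj i j hij)).symm
  have hsub : Finset.univ.biUnion A ⊆ im F Finset.univ := by
    intro y hy
    rw [Finset.mem_biUnion] at hy
    obtain ⟨i, _, hyi⟩ := hy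
    exact im_mono F (Finset.subset_univ _) (hA_sub_imW i hyi)
  have hsumle : ∑ i : Fin m, (A i).card ≤ m := by
    rw [hsum]
    have := Finset.card_le_card hsub
    omega
  have hA1 : ∀ i, (A i).card = 1 := by
    intro i0
    have h1 : ∀ i, 1 ≤ (A i).card := fun i => le_trans (hW1 i) (hWcard i)
    have h2 : (A i0).card + (m - 1) ≤ m := by
      have : (A i0).card + ∑ i ∈ Finset.univ.erase i0, (A i).card
          = ∑ i : Fin m, (A i).card :=
        Finset.add_sum_erase Finset.univ (fun i => (A i).card) (Finset.mem_univ i0)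
      have h3 : (Finset.univ.erase i0).card ≤ ∑ i ∈ Finset.univ.erase i0, (A i).card := by
        calc (Finset.univ.erase i0).card = ∑ _i ∈ Finset.univ.erase i0, 1 := by
              rw [Finset.sum_const, smul_eq_mul, mul_one]
          _ ≤ _ := Finset.sum_le_sum (fun i _ => h1 i)
      have h4 : (Finset.univ.erase i0).card = m - 1 := by
        rw [Finset.card_erase_of_mem (Finset.mem_univ _), Finset.card_univ, Fintype.card_fin]
      omega
    have := h1 i0
    omega
  have hWc1 : ∀ i, (W i).card = 1 := by
    intro i
    have := hWcard i
    have := hW1 i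
    have := hA1 i
    omega
  choose x hx using fun i => Finset.card_eq_one.1 (hWc1 i)
  choose y hy using fun i => Finset.card_eq_one.1 (hA1 i)
  have hF : ∀ i, F (x i) \ im F (pre W i) = {y i} := by
    intro i
    have h1 : A i = cmap F (pre W i) (x i) := by
      rw [hA]
      show im (cmap F (pre W i)) (W i) = _
      rw [hx i]
      exact Finset.singleton_biUnion
    have h2 := (hy i).symm.trans h1
    rw [cmap] at h2
    exact h2.symm
  have hyF : ∀ i, y i ∈ F (x i) := by
    intro i
    have : y i ∈ F (x i) \ im F (pre W i) := by rw [hF i]; exact Finset.mem_singleton_self _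
    exact (Finset.mem_sdiff.1 this).1
  have hFsub : ∀ i, F (x i) ⊆ insert (y i) (im F (pre W i)) := by
    intro i z hz
    by_cases h : z ∈ im F (pre W i)
    · exact Finset.mem_insert_of_mem h
    · have : z ∈ F (x i) \ im F (pre W i) := Finset.mem_sdiff.2 ⟨hz, h⟩
      rw [hF i] at this
      rw [Finset.mem_singleton] at this
      exact this ▸ Finset.mem_insert_self _ _
  have hxinj : Function.Injective x := by
    intro i j hij
    by_contra hne'
    have := hdisj i j (fun h => hne' (by rw [h]))
    rw [hx i, hx j, hij, Finset.disjoint_singleton_right] at this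
    exact this (Finset.mem_singleton_self _)
  have hyinj : Function.Injective y := by
    intro i j hij
    by_contra hne'
    have := hA_disj i j (fun h => hne' (by rw [h]))
    rw [hy i, hy j, hij, Finset.disjoint_singleton_right] at this
    exact this (Finset.mem_singleton_self _)
  have hcov : ∀ z : α, ∃ i, z = x i := by
    intro z
    have : z ∈ Finset.univ.biUnion W := by rw [hcover]; exact Finset.mem_univ z
    rw [Finset.mem_biUnion] at this
    obtain ⟨i, _, hzi⟩ := this
    rw [hx i, Finset.mem_singleton] at hzi
    exact ⟨i, hzi⟩
  have hxpre : ∀ i j : Fin m, j.val < i.val → x j ∈ pre W i := by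
    intro i j hji
    exact hWpre j i hji (by rw [hx j]; exact Finset.mem_singleton_self _)
  have hpre_mem : ∀ i : Fin m, ∀ w ∈ pre W i, ∃ j : Fin m, j.val < i.val ∧ w = x j := by
    intro i w hw
    rw [pre, Finset.mem_biUnion] at hw
    obtain ⟨j, hj, hwj⟩ := hw
    rw [hx j, Finset.mem_singleton] at hwj
    exact ⟨j, (Finset.mem_filter.1 hj).2, hwj⟩
  have C : ∀ k : ℕ, ∀ i : Fin m, i.val = k →
      im F (pre W i) = (Finset.univ.filter (fun j : Fin m => j.val < i.val)).image y := by
    intro k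
    induction k using Nat.strong_induction_on with
    | _ k ihk =>
      intro i hik
      apply Finset.Subset.antisymm
      · intro z hz
        rw [im, Finset.mem_biUnion] at hz
        obtain ⟨w, hw, hzw⟩ := hz
        obtain ⟨j, hji, rfl⟩ := hpre_mem i w hw
        have := hFsub j hzw
        rw [Finset.mem_insert] at this
        rcases this with rfl | hzim
        · exact Finset.mem_image.2 ⟨j, Finset.mem_filter.2 ⟨Finset.mem_univ _, hji⟩, rfl⟩
        · rw [ihk j.val (by omega) j rfl] at hzim
          obtain ⟨j', hj', rfl⟩ := Finset.mem_image.1 hzim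
          have hj'j : j'.val < j.val := (Finset.mem_filter.1 hj').2
          exact Finset.mem_image.2 ⟨j', Finset.mem_filter.2 ⟨Finset.mem_univ _, by omega⟩, rfl⟩
      · intro z hz
        obtain ⟨j, hj, rfl⟩ := Finset.mem_image.1 hz
        have hji : j.val < i.val := (Finset.mem_filter.1 hj).2
        rw [im, Finset.mem_biUnion]
        exact ⟨x j, hxpre i j hji, hyF j⟩
  choose idx hidx using hcov
  have hidx_x : ∀ i, idx (x i) = i := fun i => (hxinj (hidx (x i)).symm)
  set s : α → β := fun z => y (idx z) with hs
  have hsel : ∀ z, s z ∈ F z := by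
    intro z
    show y (idx z) ∈ F z
    have := hyF (idx z)
    rwa [← hidx z] at this
  have hsinj : Function.Injective s := by
    intro z w hzw
    rw [hs] at hzw
    have := hyinj hzw
    rw [hidx z, hidx w, this]
  refine ⟨⟨s, ⟨hsinj, hsel⟩, ?_⟩, ?_⟩
  · rintro s' ⟨hs'inj, hs'sel⟩
    have U : ∀ k : ℕ, ∀ i : Fin m, i.val = k → s' (x i) = y i := by
      intro k
      induction k using Nat.strong_induction_on with
      | _ k ihk =>
        intro i hik
        have h1 := hFsub i (hs'sel (x i))
        rw [Finset.mem_insert] at h1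
        rcases h1 with h1 | h1
        · exact h1
        · exfalso
          rw [C i.val i rfl] at h1
          obtain ⟨j, hj, hj2⟩ := Finset.mem_image.1 h1
          have hji : j.val < i.val := (Finset.mem_filter.1 hj).2
          have := ihk j.val (by omega) j rfl
          have hxx : x i = x j := hs'inj (hj2.symm.trans this.symm)
          have := hxinj hxx
          omega
    funext z
    have := U (idx z).val (idx z) rfl
    rw [hidx z, this]
    simp only [hs, hidx_x]
  · have h1 : (Finset.univ : Finset α).card = ∑ i : Fin m, (W i).card := by
      rw [← hcover]
      exact Finset.card_biUnion (fun i _ j _ hij => hdisj i j hij)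
    rw [Fintype.card, h1]
    rw [Finset.sum_congr rfl (fun i _ => hWc1 i)]
    simp

lemma forward_struct [Fintype α] (F : α → Finset β)
    (h : ∃! s : α → β, Function.Injective s ∧ ∀ x, s x ∈ F x) :
    ∃ (m : ℕ) (W : Fin m → Finset α), IsHallPartition F W ∧ m = (im F Finset.univ).card := by
  obtain ⟨s, ⟨hsinj, hsel⟩, huniq⟩ := h
  set n := Fintype.card α with hn
  have hcard : (Finset.univ : Finset α).card = n := Finset.card_univ
  have huniq' : ∀ s' : α → β, (∀ x ∈ Finset.univ, s' x ∈ F x) →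
      Set.InjOn s' (Finset.univ : Finset α) → ∀ x ∈ (Finset.univ : Finset α), s' x = s x := by
    intro s' hs' hinj' x _
    have hinj'' : Function.Injective s' := fun a b hab =>
      hinj' (by simp) (by simp) hab
    have : s' = s := huniq s' ⟨hinj'', fun x => hs' x (Finset.mem_univ x)⟩
    rw [this]
  obtain ⟨e, _, heinj, heprop⟩ := enum_lemma n Finset.univ F s hcard
    (fun x _ => hsel x) (hsinj.injOn) huniq'
  have himg : (Finset.univ : Finset (Fin n)).image e = (Finset.univ : Finset α) := by
    apply Finset.eq_of_subset_of_card_le (Finset.subset_univ _)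
    rw [Finset.card_image_of_injective _ heinj]
    simp [hn]
  set W : Fin n → Finset α := fun i => {e i} with hW
  have hpre : ∀ i, pre W i = (Finset.univ.filter (fun j : Fin n => j.val < i.val)).image e := by
    intro i
    rw [pre]
    ext z
    simp only [Finset.mem_biUnion, Finset.mem_filter, Finset.mem_univ, true_and,
      Finset.mem_image, hW, Finset.mem_singleton]
    constructor
    · rintro ⟨j, hj, rfl⟩; exact ⟨j, hj, rfl⟩
    · rintro ⟨j, hj, rfl⟩; exact ⟨j, hj, rfl⟩
  have hcmap : ∀ i, cmap F (pre W i) (e i) = {s (e i)} := by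
    intro i
    rw [cmap]
    rw [hpre i]
    exact heprop i
  refine ⟨n, W, ⟨?_, ?_, ?_, ?_, ?_⟩, ?_⟩
  · intro i j hij
    rw [hW]
    simp only [Finset.disjoint_singleton_left, Finset.mem_singleton]
    exact fun h => hij (heinj h)
  · apply Finset.eq_univ_of_forall
    intro z
    have : z ∈ (Finset.univ : Finset (Fin n)).image e := by rw [himg]; exact Finset.mem_univ z
    obtain ⟨i, _, rfl⟩ := Finset.mem_image.1 this
    exact Finset.mem_biUnion.2 ⟨i, Finset.mem_univ i, by rw [hW]; exact Finset.mem_singleton_self _⟩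
  · intro i x hx
    rw [hW, Finset.mem_singleton] at hx
    subst hx
    rw [hcmap i]
    exact Finset.singleton_nonempty _
  · intro i
    refine ⟨by rw [hW]; exact Finset.singleton_nonempty _, fun V hV hc => ?_⟩
    rw [hW] at hV
    have := Finset.eq_empty_of_ssubset_singleton hV
    rw [this] at hc
    exact absurd hc.1 (by simp)
  · intro i _
    refine ⟨by rw [hW]; exact Finset.singleton_nonempty _, ?_⟩
    have him : im (cmap F (pre W i)) (W i) = {s (e i)} := by
      rw [hW]
      show im (cmap F (pre W i)) {e i} = _
      rw [im, Finset.singleton_biUnion, hcmap i]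
    rw [him, hW]
    simp
  · -- n = card (im F univ)
    have key : ∀ k : ℕ, k ≤ n →
        (im F ((Finset.univ.filter (fun j : Fin n => j.val < k)).image e)).card = k := by
      intro k
      induction k with
      | zero =>
        intro _
        have : (Finset.univ.filter (fun j : Fin n => j.val < 0)) = ∅ := by ext j; simp
        rw [this]
        simp [im]
      | succ k ihk =>
        intro hk
        have hk' : k < n := by omega
        have hstep : (Finset.univ.filter (fun j : Fin n => j.val < k + 1)).image e
            = insert (e ⟨k, hk'⟩) ((Finset.univ.filter (fun j : Fin n => j.val < k)).image e) := by
          ext z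
          simp only [Finset.mem_image, Finset.mem_filter, Finset.mem_univ, true_and,
            Finset.mem_insert]
          constructor
          · rintro ⟨j, hj, rfl⟩
            rcases Nat.lt_or_ge j.val k with h | h
            · exact Or.inr ⟨j, h, rfl⟩
            · have : j = ⟨k, hk'⟩ := Fin.ext (by simp only [Fin.val_mk]; omega)
              exact Or.inl (by rw [this])
          · rintro (rfl | ⟨j, hj, rfl⟩)
            · exact ⟨⟨k, hk'⟩, by simp, rfl⟩
            · exact ⟨j, by omega, rfl⟩
        rw [hstep]
        rw [show im F (insert (e ⟨k, hk'⟩)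
              ((Finset.univ.filter (fun j : Fin n => j.val < k)).image e))
            = F (e ⟨k, hk'⟩) ∪ im F ((Finset.univ.filter (fun j : Fin n => j.val < k)).image e)
          from Finset.biUnion_insert]
        have hp := heprop ⟨k, hk'⟩
        have := Finset.card_sdiff_add_card (F (e ⟨k, hk'⟩))
          (im F ((Finset.univ.filter (fun j : Fin n => j.val < k)).image e))
        rw [show (Finset.univ.filter (fun j : Fin n => j.val < (⟨k, hk'⟩ : Fin n).val))
            = (Finset.univ.filter (fun j : Fin n => j.val < k)) from rfl] at hp
        rw [hp] at this
        rw [← this, Finset.card_singleton, ihk (by omega)]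
        omega
    have hfin : (Finset.univ.filter (fun j : Fin n => j.val < n)) = Finset.univ := by
      ext j; simp [j.isLt]
    have := key n (le_refl n)
    rw [hfin, himg] at this
    omega

lemma kernel_iff [Fintype α] [Nonempty α] (F : α → Finset β) :
    (∃! s : α → β, Function.Injective s ∧ ∀ x, s x ∈ F x) ↔
      ∀ x, (kernel F x).card = 1 := by
  constructor
  · rintro ⟨s, ⟨hsinj, hsel⟩, huniq⟩ x
    have : kernel F x = {s x} := by
      apply Finset.eq_singleton_iff_unique_mem.2
      constructor
      · rw [kernel, Finset.mem_filter]
        exact ⟨hsel x, s, hsinj, hsel, rfl⟩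
      · intro y hy
        rw [kernel, Finset.mem_filter] at hy
        obtain ⟨-, s', hs'inj, hs'sel, hs'x⟩ := hy
        rw [← hs'x, huniq s' ⟨hs'inj, hs'sel⟩]
    rw [this, Finset.card_singleton]
  · intro h
    obtain ⟨x0⟩ := ‹Nonempty α›
    have h0 := h x0
    obtain ⟨y, hy⟩ := Finset.card_pos.1 (by omega : 0 < (kernel F x0).card)
    rw [kernel, Finset.mem_filter] at hy
    obtain ⟨-, s, hsinj, hsel, -⟩ := hy
    refine ⟨s, ⟨hsinj, hsel⟩, ?_⟩
    rintro s' ⟨hs'inj, hs'sel⟩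
    funext x
    obtain ⟨a, ha⟩ := Finset.card_eq_one.1 (h x)
    have h1 : s' x ∈ kernel F x := by
      rw [kernel, Finset.mem_filter]
      exact ⟨hs'sel x, s', hs'inj, hs'sel, rfl⟩
    have h2 : s x ∈ kernel F x := by
      rw [kernel, Finset.mem_filter]
      exact ⟨hsel x, s, hsinj, hsel, rfl⟩
    rw [ha, Finset.mem_singleton] at h1 h2
    rw [h1, h2]

end Aux

theorem stmt19 [Fintype α] [Nonempty α] [DecidableEq α] [Fintype β] [Nonempty β] [DecidableEq β] (F : α → Finset β) :
    ((∃! s : α → β, Function.Injective s ∧ ∀ x, s x ∈ F x) ↔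
      ∀ x, (kernel F x).card = 1) ∧
    ((∃! s : α → β, Function.Injective s ∧ ∀ x, s x ∈ F x) ↔
      ∃ (m : ℕ) (W : Fin m → Finset α), IsHallPartition F W ∧ m = (im F Finset.univ).card) ∧
    (∀ (m : ℕ) (W : Fin m → Finset α), IsHallPartition F W →
      m = (im F Finset.univ).card → m = Fintype.card α) := by
  refine ⟨kernel_iff F, ⟨fun h => forward_struct F h, ?_⟩, ?_⟩
  · rintro ⟨m, W, hp, hm⟩
    exact (reverse_struct F W hp hm).1
  · intro m W hp hm
    exact (reverse_struct F W hp hm).2
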